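/- In U_q^+(so_5), the element z' := −(q²−q⁻²)(q+q⁻¹)E4E2 + q²(q²−1)E3² is central, where E3 = E1E2 − q⁻²E2E1 and E4 = (q+q⁻¹)⁻¹(E1²E2 − q⁻¹(q+q⁻¹)E1E2E1 + q⁻²E2E1²). -/

import Mathlib

/-!
The commutators `z'E₁ - E₁z'` and `z'E₂ - E₂z'` are, already in the free algebra, explicit
two-sided combinations of the two Serre relators (only the quadratic one for `E₂`), so `z'`
commutes with both generators of `U_q⁺(so₅)` and is therefore central.
-/

noncomputable section

open FreeAlgebra

/-- The quantum Serre relations of type B₂ defining `U_q⁺(so₅)`. -/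
inductive so5Rel (q : ℂ) : FreeAlgebra ℂ (Fin 2) → FreeAlgebra ℂ (Fin 2) → Prop
  | serre1 : so5Rel q
      (ι ℂ 0 * ι ℂ 0 * ι ℂ 0 * ι ℂ 1
        - (q ^ 2 + 1 + (q ^ 2)⁻¹) • (ι ℂ 0 * ι ℂ 0 * ι ℂ 1 * ι ℂ 0)
        + (q ^ 2 + 1 + (q ^ 2)⁻¹) • (ι ℂ 0 * ι ℂ 1 * ι ℂ 0 * ι ℂ 0)
        - ι ℂ 1 * ι ℂ 0 * ι ℂ 0 * ι ℂ 0) 0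
  | serre2 : so5Rel q
      (ι ℂ 1 * ι ℂ 1 * ι ℂ 0 - (q ^ 2 + (q ^ 2)⁻¹) • (ι ℂ 1 * ι ℂ 0 * ι ℂ 1)
        + ι ℂ 0 * ι ℂ 1 * ι ℂ 1) 0

/-- `U_q⁺(so₅)`. -/
abbrev UqB2 (q : ℂ) := RingQuot (so5Rel q)

def F₁ (q : ℂ) : UqB2 q := RingQuot.mkAlgHom ℂ (so5Rel q) (ι ℂ 0)
def F₂ (q : ℂ) : UqB2 q := RingQuot.mkAlgHom ℂ (so5Rel q) (ι ℂ 1)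

/-- The root vector `E₃ = E₁E₂ - q⁻²E₂E₁`. -/
def F₃ (q : ℂ) : UqB2 q := F₁ q * F₂ q - (q ^ 2)⁻¹ • (F₂ q * F₁ q)

/-- The root vector `E₄ = (q+q⁻¹)⁻¹ (E₁²E₂ - q⁻¹(q+q⁻¹)E₁E₂E₁ + q⁻²E₂E₁²)`. -/
def F₄ (q : ℂ) : UqB2 q :=
  (q + q⁻¹)⁻¹ • (F₁ q * F₁ q * F₂ q - (q⁻¹ * (q + q⁻¹)) • (F₁ q * F₂ q * F₁ q)
    + (q ^ 2)⁻¹ • (F₂ q * F₁ q * F₁ q))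

/-- The central element `z = (1-q²)E₁E₃ + q²(q+q⁻¹)E₄`. -/
def zB2 (q : ℂ) : UqB2 q := (1 - q ^ 2) • (F₁ q * F₃ q) + (q ^ 2 * (q + q⁻¹)) • F₄ q

/-- The central element `z' = -(q²-q⁻²)(q+q⁻¹)E₄E₂ + q²(q²-1)E₃²`. -/
def z'B2 (q : ℂ) : UqB2 q :=
  (-((q ^ 2 - (q ^ 2)⁻¹) * (q + q⁻¹))) • (F₄ q * F₂ q) + (q ^ 2 * (q ^ 2 - 1)) • (F₃ q ^ 2)

section SerreB2

variable {K R : Type*} [Field K] [Ring R] [Algebra K R]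

def serreCubic (q : K) (a b : R) : R :=
  a * a * a * b - (q ^ 2 + 1 + (q ^ 2)⁻¹) • (a * a * b * a)
    + (q ^ 2 + 1 + (q ^ 2)⁻¹) • (a * b * a * a) - b * a * a * a

def serreQuadratic (q : K) (a b : R) : R :=
  b * b * a - (q ^ 2 + (q ^ 2)⁻¹) • (b * a * b) + a * b * b

/-- `z'` as a word in two generators, the factor `(q + q⁻¹)⁻¹` of `E₄` being cancelled
against the coefficient `q + q⁻¹` of `E₄E₂`. -/
def zPrime (q : K) (a b : R) : R :=
  (-(q ^ 2 - (q ^ 2)⁻¹)) •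
      ((a * a * b - (q⁻¹ * (q + q⁻¹)) • (a * b * a) + (q ^ 2)⁻¹ • (b * a * a)) * b)
    + (q ^ 2 * (q ^ 2 - 1)) • ((a * b - (q ^ 2)⁻¹ • (b * a)) ^ 2)

theorem zPrime_mul_sub_mul_zPrime_left {q : K} (hq : q ≠ 0) (a b : R) :
    zPrime q a b * a - a * zPrime q a b =
      (1 - (q ^ 2)⁻¹) • (b * serreCubic q a b + serreCubic q a b * b)
      + (q ^ 2 - 1) • (a * a * serreQuadratic q a b)
      - (q ^ 2 - (q ^ 2)⁻¹) • (a * serreQuadratic q a b * a)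
      + (1 - (q ^ 2)⁻¹) • (serreQuadratic q a b * a * a) := by
  simp only [zPrime, serreCubic, serreQuadratic, smul_sub, smul_add, smul_smul, sub_mul, mul_sub,
    add_mul, mul_add, smul_mul_assoc, mul_smul_comm, pow_two, mul_assoc, neg_sub]
  match_scalars <;> field_simp <;> ring

theorem zPrime_mul_sub_mul_zPrime_right {q : K} (hq : q ≠ 0) (a b : R) :
    zPrime q a b * b - b * zPrime q a b =
      (1 - (q ^ 2)⁻¹) • (a * b * serreQuadratic q a b)
      - (q ^ 2 - (q ^ 2)⁻¹) • (a * serreQuadratic q a b * b)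
      + (q ^ 2 - (q ^ 2)⁻¹ * (q ^ 2)⁻¹) • (serreQuadratic q a b * a * b)
      - ((q ^ 2)⁻¹ - (q ^ 2)⁻¹ * (q ^ 2)⁻¹) • (b * a * serreQuadratic q a b)
      - (1 - (q ^ 2)⁻¹) • (serreQuadratic q a b * b * a) := by
  simp only [zPrime, serreQuadratic, smul_sub, smul_add, smul_smul, sub_mul, mul_sub,
    add_mul, mul_add, smul_mul_assoc, mul_smul_comm, pow_two, mul_assoc, neg_sub]
  match_scalars <;> field_simp <;> ring

theorem commute_zPrime_left {q : K} (hq : q ≠ 0) {a b : R} (hc : serreCubic q a b = 0)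
    (hs : serreQuadratic q a b = 0) : Commute (zPrime q a b) a := by
  have h := zPrime_mul_sub_mul_zPrime_left hq a b
  rw [hc, hs] at h
  simp only [mul_zero, zero_mul, add_zero, smul_zero, sub_zero] at h
  exact sub_eq_zero.1 h

theorem commute_zPrime_right {q : K} (hq : q ≠ 0) {a b : R} (hs : serreQuadratic q a b = 0) :
    Commute (zPrime q a b) b := by
  have h := zPrime_mul_sub_mul_zPrime_right hq a b
  rw [hs] at h
  simp only [mul_zero, zero_mul, add_zero, smul_zero, sub_zero] at h
  exact sub_eq_zero.1 h

end SerreB2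

theorem RingQuot.commute_of_forall_commute_mkAlgHom_ι {S X : Type*} [CommSemiring S]
    {r : FreeAlgebra S X → FreeAlgebra S X → Prop} {z : RingQuot r}
    (h : ∀ i, Commute z (RingQuot.mkAlgHom S r (ι S i))) (x : RingQuot r) : Commute z x := by
  have hx : x ∈ Algebra.adjoin S (Set.range (RingQuot.mkAlgHom S r ∘ ι S)) := by
    rw [Set.range_comp, Algebra.adjoin_image, FreeAlgebra.adjoin_range_ι, Algebra.map_top,
      (RingQuot.mkAlgHom S r).range_eq_top.2 (RingQuot.mkAlgHom_surjective S r)]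
    trivial
  exact Algebra.commute_of_mem_adjoin_of_forall_mem_commute hx (Set.forall_mem_range.2 h)

theorem serreCubic_F₁_F₂ (q : ℂ) : serreCubic q (F₁ q) (F₂ q) = 0 := by
  simpa only [serreCubic, map_sub, map_add, map_mul, map_smul, map_zero, F₁, F₂] using
    RingQuot.mkAlgHom_rel ℂ (so5Rel.serre1 (q := q))

theorem serreQuadratic_F₁_F₂ (q : ℂ) : serreQuadratic q (F₁ q) (F₂ q) = 0 := by
  simpa only [serreQuadratic, map_sub, map_add, map_mul, map_smul, map_zero, F₁, F₂] using
    RingQuot.mkAlgHom_rel ℂ (so5Rel.serre2 (q := q))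

theorem z'B2_eq_zPrime {q : ℂ} (h : q ^ 2 + 1 ≠ 0) : z'B2 q = zPrime q (F₁ q) (F₂ q) := by
  simp only [z'B2, F₄, F₃, zPrime, smul_mul_assoc, smul_smul]
  congr 2
  field_simp

theorem sq_add_one_ne_zero_of_pow_four_ne_one {K : Type*} [CommRing K] {q : K} (h4 : q ^ 4 ≠ 1) :
    q ^ 2 + 1 ≠ 0 :=
  fun h ↦ h4 (by linear_combination (q ^ 2 - 1) * h)

theorem stmt10 (q : ℂ) (hq : q ≠ 0) (hq' : ∀ n : ℕ, 0 < n → q ^ n ≠ 1) :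
    ∀ x : UqB2 q, z'B2 q * x = x * z'B2 q := by
  rw [z'B2_eq_zPrime (sq_add_one_ne_zero_of_pow_four_ne_one (hq' 4 (by norm_num)))]
  refine fun x ↦ (RingQuot.commute_of_forall_commute_mkAlgHom_ι (fun i ↦ ?_) x).eq
  fin_cases i
  · exact commute_zPrime_left hq (serreCubic_F₁_F₂ q) (serreQuadratic_F₁_F₂ q)
  · exact commute_zPrime_right hq (serreQuadratic_F₁_F₂ q)
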